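/- arXiv:2209.08944 — 3 statements merged into one kernel-verified Lean document; each statement's English description precedes it below -/
import Mathlib

section
/- Let E be a directed graph, let (e₁,…,e_n) be a path of length n in E, and suppose there exists a bijection σ of {1,…,n} with σ ≠ id such that (e_{σ(1)},…,e_{σ(n)}) is again a path in E. Then E contains a loop. -/
/-- A directed graph: a set of vertices, a set of edges, and source/target maps
(parallel edges are allowed). -/
structure DiGraph where
  V : Type
  E : Type
  s : E → V
  t : E → V

namespace DiGraph

/-- `p = (e₁, …, e_k)` is a path of length `k`: `t eᵢ = s eᵢ₊₁` for `1 ≤ i < k`. -/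
def IsPath (G : DiGraph) {k : ℕ} (p : Fin k → G.E) : Prop :=
  ∀ (i : ℕ) (hi : i + 1 < k), G.t (p ⟨i, by omega⟩) = G.s (p ⟨i + 1, hi⟩)

/-- A loop is a (nonempty) path whose source equals its target. -/
def IsLoop (G : DiGraph) {k : ℕ} (p : Fin k → G.E) : Prop :=
  G.IsPath p ∧ ∃ hk : 0 < k, G.s (p ⟨0, hk⟩) = G.t (p ⟨k - 1, by omega⟩)

/-- A directed graph is acyclic if it contains no loops. -/
def Acyclic (G : DiGraph) : Prop :=
  ∀ (m : ℕ) (q : Fin m → G.E), ¬ G.IsLoop q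

end DiGraph

/-- If the edges of a finite path can be non-trivially permuted into a
path, then the graph contains a loop. -/
theorem loop_of_permuted_path (G : DiGraph) (n : ℕ) (p : Fin n → G.E) (hp : G.IsPath p)
    (σ : Equiv.Perm (Fin n)) (hσ : σ ≠ 1)
    (hpσ : G.IsPath fun i => p (σ i)) :
    ∃ (m : ℕ) (q : Fin m → G.E), G.IsLoop q := by
  -- A helper: any segment from index a to b with matching endpoints gives a loop.
  have seg : ∀ (a b : ℕ) (hab : a < b) (hbn : b ≤ n),
      G.s (p ⟨a, by omega⟩) = G.t (p ⟨b - 1, by omega⟩) →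
      ∃ (m : ℕ) (q : Fin m → G.E), G.IsLoop q := by
    intro a b hab hbn hv
    refine ⟨b - a, fun i => p ⟨a + i.1, by omega⟩, ?_, by omega, ?_⟩
    · intro i hi
      exact hp (a + i) (by omega)
    · simp only
      have h1 : (⟨a + 0, by omega⟩ : Fin n) = ⟨a, by omega⟩ := by
        simp only [Fin.mk.injEq]; omega
      have h2 : (⟨a + (b - a - 1), by omega⟩ : Fin n) = ⟨b - 1, by omega⟩ := by
        simp only [Fin.mk.injEq]; omega
      rw [h1, h2]; exact hv
  -- There is some j with σ(j+1) ≠ σ(j) + 1.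
  have hn : 0 < n := by
    rcases Nat.eq_zero_or_pos n with h0 | h0
    · exfalso; apply hσ; subst h0
      exact Equiv.ext fun i => i.elim0
    · exact h0
  have key : ∃ (j : ℕ) (hj : j + 1 < n),
      ((σ ⟨j + 1, hj⟩ : Fin n) : ℕ) ≠ ((σ ⟨j, by omega⟩ : Fin n) : ℕ) + 1 := by
    by_contra h
    push_neg at h
    apply hσ
    have hstep : ∀ (j : ℕ) (hj : j < n),
        ((σ ⟨j, hj⟩ : Fin n) : ℕ) = ((σ ⟨0, hn⟩ : Fin n) : ℕ) + j := by
      intro j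
      induction j with
      | zero => intro hj; simp
      | succ k ih =>
        intro hj
        have := h k hj
        rw [this, ih (by omega)]; omega
    have h0 : ((σ ⟨0, hn⟩ : Fin n) : ℕ) = 0 := by
      have h1 := hstep (n - 1) (by omega)
      have h2 := (σ ⟨n - 1, by omega⟩).isLt
      omega
    ext i
    have h3 : (⟨(i : ℕ), i.isLt⟩ : Fin n) = i := Fin.eta i i.isLt
    have h4 := hstep (i : ℕ) i.isLt
    rw [h3] at h4
    simp [h4, h0]
  obtain ⟨j, hj, hne⟩ := key
  have hvert : G.t (p (σ ⟨j, by omega⟩)) = G.s (p (σ ⟨j + 1, hj⟩)) := hpσ j hj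
  set c : ℕ := ((σ ⟨j, by omega⟩ : Fin n) : ℕ) with hc
  set b : ℕ := ((σ ⟨j + 1, hj⟩ : Fin n) : ℕ) with hb
  have hcn : c < n := (σ ⟨j, by omega⟩).isLt
  have hbn : b < n := (σ ⟨j + 1, hj⟩).isLt
  have hetac : (⟨c, hcn⟩ : Fin n) = σ ⟨j, by omega⟩ := rfl
  have hetab : (⟨b, hbn⟩ : Fin n) = σ ⟨j + 1, hj⟩ := rfl
  rcases lt_or_gt_of_ne hne with hlt | hgt
  · -- b < c + 1, i.e. b ≤ c : loop from b to c+1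
    apply seg b (c + 1) (by omega) (by omega)
    show G.s (p ⟨b, hbn⟩) = G.t (p ⟨c, hcn⟩)
    rw [hetab, hetac]
    exact hvert.symm
  · -- c + 1 < b : loop from c+1 to b
    apply seg (c + 1) b (by omega) (by omega)
    have h1 : G.t (p ⟨c, hcn⟩) = G.s (p ⟨c + 1, by omega⟩) := hp c (by omega)
    have h2 : G.t (p ⟨b - 1, by omega⟩) = G.s (p ⟨b - 1 + 1, by omega⟩) := hp (b - 1) (by omega)
    have h3 : (⟨b - 1 + 1, by omega⟩ : Fin n) = ⟨b, hbn⟩ := by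
      simp only [Fin.mk.injEq]; omega
    have h2' : G.t (p ⟨b - 1, by omega⟩) = G.s (p (σ ⟨j + 1, hj⟩)) :=
      h2.trans (congrArg (fun e => G.s (p e)) (h3.trans hetab))
    show G.s (p ⟨c + 1, by omega⟩) = G.t (p ⟨b - 1, by omega⟩)
    exact (h1.symm.trans (congrArg (fun e => G.t (p e)) hetac)).trans
      (hvert.trans h2'.symm)
end

section
/- Let E be a directed graph, let (eᵢ)_{i∈ℕ} be an infinite sequence of edges of E with t(eᵢ) = s(eᵢ₊₁) for all i ∈ ℕ (a path infinite in one direction), and suppose there exists a bijection σ : ℕ → ℕ with σ ≠ id such that (e_{σ(i)})_{i∈ℕ} also satisfies t(e_{σ(i)}) = s(e_{σ(i+1)}) for all i ∈ ℕ. Then E contains a loop, i.e., a finite path whose source equals its target. -/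
/-- If two distinct indices of an infinite path share the same source vertex,
the graph contains a loop. -/
lemma loop_aux (G : DiGraph) (e : ℕ → G.E)
    (he : ∀ i : ℕ, G.t (e i) = G.s (e (i + 1)))
    (a b : ℕ) (hab : a < b) (hs : G.s (e a) = G.s (e b)) :
    ∃ (m : ℕ) (q : Fin m → G.E), G.IsLoop q := by
  refine ⟨b - a, fun j => e (a + (j : ℕ)), ?_, ?_⟩
  · intro j hj
    show G.t (e (a + j)) = G.s (e (a + (j + 1)))
    rw [show a + (j + 1) = (a + j) + 1 from by omega]
    exact he _
  · refine ⟨by omega, ?_⟩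
    show G.s (e (a + 0)) = G.t (e (a + (b - a - 1)))
    rw [show a + (b - a - 1) = b - 1 from by omega, he (b - 1),
      show b - 1 + 1 = b from by omega, show a + 0 = a from rfl]
    exact hs

/-- If the edges of a path infinite in one direction can be non-trivially
permuted into such a path, then the graph contains a loop. -/
theorem loop_of_permuted_infinite_path (G : DiGraph) (e : ℕ → G.E)
    (he : ∀ i : ℕ, G.t (e i) = G.s (e (i + 1)))
    (σ : Equiv.Perm ℕ) (hσ : σ ≠ 1)
    (heσ : ∀ i : ℕ, G.t (e (σ i)) = G.s (e (σ (i + 1)))) :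
    ∃ (m : ℕ) (q : Fin m → G.E), G.IsLoop q := by
  by_cases hstep : ∀ i, σ (i + 1) = σ i + 1
  · exfalso
    have hlin : ∀ i, σ i = σ 0 + i := by
      intro i
      induction i with
      | zero => rfl
      | succ n ih => rw [hstep, ih]; ring
    have h0 : σ 0 = 0 := by
      obtain ⟨j, hj⟩ := σ.surjective 0
      have := hlin j; omega
    apply hσ
    ext i
    simp [hlin i, h0]
  · push_neg at hstep
    obtain ⟨i, hi⟩ := hstep
    have hs : G.s (e (σ i + 1)) = G.s (e (σ (i + 1))) := by
      rw [← he (σ i), heσ]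
    rcases lt_trichotomy (σ i + 1) (σ (i + 1)) with h | h | h
    · exact loop_aux G e he _ _ h hs
    · exact absurd h.symm hi
    · exact loop_aux G e he _ _ h hs.symm
end

section
/- Let E be a finite directed graph with N ≥ 2 edges, let 1 ≤ k ≤ N, write N = n·k + r with 0 ≤ r ≤ k − 1, and assume that E has no loops of length strictly less than k. Then the number of paths of length k in E is at most k·(n+1)^r·n^(k−r). -/
namespace CountPathsAux

open DiGraph

/-- In a graph with no loops of length `< k`, two edges of a path of length `k`
with the same source must be equal (same index). -/
lemma source_eq_imp_eq {G : DiGraph} {k : ℕ}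
    (hnl : ∀ (m : ℕ) (q : Fin m → G.E), m < k → ¬ G.IsLoop q)
    {p : Fin k → G.E} (hp : G.IsPath p) :
    ∀ i j : Fin k, G.s (p i) = G.s (p j) → i = j := by
  have hcong : ∀ (a b : ℕ) (ha : a < k) (hb : b < k), a = b → p ⟨a, ha⟩ = p ⟨b, hb⟩ := by
    intro a b ha hb h
    subst h
    rfl
  have H : ∀ (x y : ℕ) (hx : x < k) (hy : y < k), x < y →
      G.s (p ⟨x, hx⟩) ≠ G.s (p ⟨y, hy⟩) := by
    intro x y hx hy hlt hxy
    obtain ⟨m, hm⟩ : ∃ m, m = y - x := ⟨_, rfl⟩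
    have hm1 : 0 < m := by omega
    have hmk : m < k := by omega
    apply hnl m (fun a : Fin m => p ⟨x + a.1, by have := a.2; omega⟩) hmk
    refine ⟨?_, hm1, ?_⟩
    · intro i0 hi0
      exact hp (x + i0) (by omega)
    · show G.s (p ⟨x + 0, by omega⟩) = G.t (p ⟨x + (m - 1), by omega⟩)
      have h3 := hp (y - 1) (by omega)
      calc G.s (p ⟨x + 0, by omega⟩)
          = G.s (p ⟨x, hx⟩) := congrArg G.s (hcong _ _ _ _ (by omega))
        _ = G.s (p ⟨y, hy⟩) := hxy
        _ = G.s (p ⟨(y-1)+1, by omega⟩) := congrArg G.s (hcong _ _ _ _ (by omega))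
        _ = G.t (p ⟨y-1, by omega⟩) := h3.symm
        _ = G.t (p ⟨x + (m-1), by omega⟩) := congrArg G.t (hcong _ _ _ _ (by omega))
  intro i j hij
  rcases lt_trichotomy i.val j.val with h | h | h
  · exact absurd hij (H _ _ i.isLt j.isLt h)
  · exact Fin.ext h
  · exact absurd hij.symm (H _ _ j.isLt i.isLt h)

lemma path_inj {G : DiGraph} {k : ℕ}
    (hnl : ∀ (m : ℕ) (q : Fin m → G.E), m < k → ¬ G.IsLoop q)
    {p : Fin k → G.E} (hp : G.IsPath p) : Function.Injective p := by
  intro i j hij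
  exact source_eq_imp_eq hnl hp i j (by rw [hij])

/-- The graph with one edge deleted. -/
def del (G : DiGraph) (e : G.E) : DiGraph where
  V := G.V
  E := {f : G.E // f ≠ e}
  s := fun f => G.s f.1
  t := fun f => G.t f.1

lemma del_noloops {G : DiGraph} {k : ℕ} (e : G.E)
    (hnl : ∀ (m : ℕ) (q : Fin m → G.E), m < k → ¬ G.IsLoop q) :
    ∀ (m : ℕ) (q : Fin m → (del G e).E), m < k → ¬ (del G e).IsLoop q := by
  intro m q hm hq
  exact hnl m (fun a => (q a).1) hm hq

lemma card_del (G : DiGraph) [Finite G.E] (e : G.E) :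
    Nat.card (del G e).E = Nat.card G.E - 1 := by
  classical
  haveI := Fintype.ofFinite G.E
  show Nat.card {f : G.E // f ≠ e} = _
  rw [Nat.card_eq_fintype_card, Nat.card_eq_fintype_card]
  have h1 : Fintype.card {f : G.E // ¬ (f = e)} = Fintype.card G.E - Fintype.card {f : G.E // f = e} :=
    Fintype.card_subtype_compl _
  rw [Fintype.card_subtype_eq] at h1
  exact h1

/-- Splitting: paths are either paths avoiding `e` (hence paths of `del G e`) or
paths through `e`. -/
lemma card_split (G : DiGraph) [Finite G.V] [Finite G.E] (k : ℕ) (e : G.E) :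
    Nat.card {p : Fin k → G.E // G.IsPath p} ≤
      Nat.card {p : Fin k → (del G e).E // (del G e).IsPath p}
      + Nat.card {pp : {p : Fin k → G.E // G.IsPath p} // ∃ i, pp.1 i = e} := by
  classical
  haveI : Finite (del G e).E := Subtype.finite
  set Φ : {p : Fin k → G.E // G.IsPath p} →
      ({p : Fin k → (del G e).E // (del G e).IsPath p} ⊕
        {pp : {p : Fin k → G.E // G.IsPath p} // ∃ i, pp.1 i = e}) := fun p =>
    if h : ∃ i, p.1 i = e then Sum.inr ⟨p, h⟩
    else Sum.inl ⟨fun a => ⟨p.1 a, fun hc => h ⟨a, hc⟩⟩, fun i hi => p.2 i hi⟩ with hΦ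
  have hinj : Function.Injective Φ := by
    intro p q hpq
    by_cases hp : ∃ i, p.1 i = e <;> by_cases hq : ∃ i, q.1 i = e
    · rw [hΦ] at hpq
      simp only [dif_pos hp, dif_pos hq] at hpq
      injection hpq with h
      exact congrArg Subtype.val h
    · rw [hΦ] at hpq
      simp only [dif_pos hp, dif_neg hq] at hpq
      exact absurd hpq (by simp)
    · rw [hΦ] at hpq
      simp only [dif_neg hp, dif_pos hq] at hpq
      exact absurd hpq (by simp)
    · rw [hΦ] at hpq
      simp only [dif_neg hp, dif_neg hq] at hpq
      injection hpq with h
      have h2 := congrArg Subtype.val h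
      apply Subtype.ext
      funext a
      have h3 := congrFun h2 a
      exact congrArg Subtype.val h3
  have := Nat.card_le_card_of_injective Φ hinj
  rwa [Nat.card_sum] at this

/-- If all out-degrees are at most `M`, then there are at most `N * M ^ j` paths of
length `j+1`. -/
lemma chain_bound (G : DiGraph) [Finite G.E] (M N : ℕ) (hE : Nat.card G.E = N)
    (hM : ∀ v : G.V, Nat.card {f : G.E // G.s f = v} ≤ M) :
    ∀ j : ℕ, Nat.card {p : Fin (j+1) → G.E // G.IsPath p} ≤ N * M ^ j := by
  intro j
  induction j with
  | zero =>
    have hinj : Function.Injective (fun p : {p : Fin 1 → G.E // G.IsPath p} => p.1 0) := by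
      intro p q h
      apply Subtype.ext
      funext a
      have ha : a = 0 := Subsingleton.elim a 0
      rw [ha]; exact h
    have := Nat.card_le_card_of_injective _ hinj
    simpa [hE] using this
  | succ j ih =>
    classical
    have hMemb : ∀ v : G.V, ∃ g : {f : G.E // G.s f = v} → Fin M, Function.Injective g := by
      intro v
      have h1 : Nat.card {f : G.E // G.s f = v} ≤ M := hM v
      exact ⟨fun x => Fin.castLE h1 (Finite.equivFin {f : G.E // G.s f = v} x),
        fun a b hab => (Finite.equivFin _).injective (Fin.castLE_injective h1 hab)⟩
    choose g hg using hMemb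
    have depInj : ∀ (v1 v2 : G.V), v1 = v2 → ∀ (x1 : {f : G.E // G.s f = v1})
        (x2 : {f : G.E // G.s f = v2}), g v1 x1 = g v2 x2 → x1.1 = x2.1 := by
      intro v1 v2 hv
      subst hv
      intro x1 x2 h12
      exact congrArg Subtype.val (hg v1 h12)
    set F : {p : Fin (j+1+1) → G.E // G.IsPath p} →
        ({p : Fin (j+1) → G.E // G.IsPath p} × Fin M) := fun p =>
      ⟨⟨fun a => p.1 ⟨a.1, by have := a.2; omega⟩, fun i hi => p.2 i (by omega)⟩,
        g (G.t (p.1 ⟨j, by omega⟩)) ⟨p.1 ⟨j+1, by omega⟩, (p.2 j (by omega)).symm⟩⟩ with hF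
    have hFinj : Function.Injective F := by
      intro p q hpq
      rw [hF] at hpq
      have h1 := congrArg Prod.fst hpq
      have h2 := congrArg Prod.snd hpq
      simp only at h1 h2
      have h1' := congrArg Subtype.val h1
      simp only at h1'
      have hcoord : ∀ (x : ℕ) (hx : x < j+1), p.1 ⟨x, by omega⟩ = q.1 ⟨x, by omega⟩ := by
        intro x hx
        exact congrFun h1' ⟨x, hx⟩
      have hv : G.t (p.1 ⟨j, by omega⟩) = G.t (q.1 ⟨j, by omega⟩) :=
        congrArg G.t (hcoord j (by omega))
      have hlast : p.1 ⟨j+1, by omega⟩ = q.1 ⟨j+1, by omega⟩ :=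
        depInj _ _ hv _ _ h2
      apply Subtype.ext
      funext a
      by_cases ha : a.1 < j + 1
      · exact hcoord a.1 ha
      · have ha2 : a = (⟨j+1, by omega⟩ : Fin (j+1+1)) :=
          Fin.ext (show a.1 = j + 1 by have := a.2; omega)
        rw [ha2]
        exact hlast
    have hcard := Nat.card_le_card_of_injective F hFinj
    have hprod : Nat.card ({p : Fin (j+1) → G.E // G.IsPath p} × Fin M)
        = Nat.card {p : Fin (j+1) → G.E // G.IsPath p} * M := by
      rw [Nat.card_prod]
      simp
    calc Nat.card {p : Fin (j+1+1) → G.E // G.IsPath p}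
        ≤ Nat.card {p : Fin (j+1) → G.E // G.IsPath p} * M := by rw [← hprod]; exact hcard
      _ ≤ (N * M ^ j) * M := mul_le_mul_left ih M
      _ = N * M ^ (j+1) := by rw [mul_assoc, ← pow_succ]

lemma binom_aux (n : ℕ) : ∀ r : ℕ, n ^ r + r * n ^ (r-1) ≤ (n+1) ^ r := by
  intro r
  induction r with
  | zero => simp
  | succ s ih =>
    rcases Nat.eq_zero_or_pos s with hs | hs
    · subst hs
      simp
    · obtain ⟨u, rfl⟩ : ∃ u, s = u + 1 := ⟨s - 1, by omega⟩
      simp only [Nat.add_sub_cancel] at ih ⊢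
      have ih' : n ^ (u+1) + (u+1) * n ^ u ≤ (n+1) ^ (u+1) := ih
      have hx : (n ^ (u+1) + (u+1) * n ^ u) * (n+1)
          = n ^ (u+1+1) + (u+1+1) * n ^ (u+1) + (u+1) * n ^ u := by ring
      calc n ^ (u+1+1) + (u+1+1) * n ^ (u+1)
          ≤ (n ^ (u+1) + (u+1) * n ^ u) * (n+1) := by rw [hx]; exact Nat.le_add_right _ _
        _ ≤ (n+1) ^ (u+1) * (n+1) := mul_le_mul_left ih' _
        _ = (n+1) ^ (u+1+1) := (pow_succ _ _).symm

lemma arithA (k n r N : ℕ) (hk : 1 ≤ k) (hrk : r < k) (hN : k * n + r = N) :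
    N * n ^ (k-1) ≤ k * ((n+1) ^ r * n ^ (k-r)) := by
  subst hN
  have hpow : n * n ^ (k-1) = n ^ k := by
    have h1 : k - 1 + 1 = k := by omega
    conv_rhs => rw [← h1]
    rw [pow_succ, mul_comm]
  have t1 : n ^ r * n ^ (k-r) = n ^ k := by
    rw [← pow_add]
    congr 1
    omega
  rcases Nat.eq_zero_or_pos r with hr0 | hr1
  · subst hr0
    simp only [pow_zero, one_mul, Nat.add_zero, Nat.sub_zero]
    apply le_of_eq
    calc k * n * n ^ (k-1) = k * (n * n ^ (k-1)) := by ring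
      _ = k * n ^ k := by rw [hpow]
  · have t2 : n ^ (r-1) * n ^ (k-r) = n ^ (k-1) := by
      rw [← pow_add]
      congr 1
      omega
    have hb := binom_aux n r
    calc (k * n + r) * n ^ (k-1)
        = k * (n * n ^ (k-1)) + r * n ^ (k-1) := by ring
      _ = k * n ^ k + r * n ^ (k-1) := by rw [hpow]
      _ ≤ k * n ^ k + k * (r * n ^ (k-1)) := by
          have : r * n ^ (k-1) ≤ k * (r * n ^ (k-1)) := Nat.le_mul_of_pos_left _ (by omega)
          exact Nat.add_le_add_left this _
      _ = k * ((n ^ r + r * n ^ (r-1)) * n ^ (k-r)) := by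
          rw [add_mul, t1, mul_add]
          congr 1
          rw [mul_assoc, t2]
      _ ≤ k * ((n+1) ^ r * n ^ (k-r)) :=
          mul_le_mul_right (mul_le_mul_left hb _) k

lemma arithB1 (k n s : ℕ) (hs : s + 1 < k) :
    (n+1) * (k * ((n+1) ^ s * n ^ (k-s))) ≤ n * (k * ((n+1) ^ (s+1) * n ^ (k-(s+1)))) := by
  have e1 : k - s = (k - (s+1)) + 1 := by omega
  rw [e1, pow_succ, pow_succ]
  apply le_of_eq
  ring

lemma arithB0 (k m' : ℕ) (hk : 1 ≤ k) :
    (m'+2) * (k * ((m'+1) ^ (k-1) * m' ^ (k-(k-1)))) ≤ (m'+1) * (k * ((m'+2) ^ 0 * (m'+1) ^ (k-0))) := by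
  have e1 : k - (k-1) = 1 := by omega
  have e2 : k - 0 = k := rfl
  have e3 : k = (k-1) + 1 := by omega
  rw [e1, pow_one, pow_zero, one_mul, e2]
  calc (m'+2) * (k * ((m'+1) ^ (k-1) * m'))
      = k * (m'+1) ^ (k-1) * ((m'+2) * m') := by ring
    _ ≤ k * (m'+1) ^ (k-1) * ((m'+1) * (m'+1)) := by
        apply mul_le_mul_right
        nlinarith
    _ = (m'+1) * (k * ((m'+1) ^ (k-1) * (m'+1))) := by ring
    _ = (m'+1) * (k * (m'+1) ^ (k-1+1)) := by rw [pow_succ]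
    _ = (m'+1) * (k * (m'+1) ^ k) := by rw [← e3]

lemma assemble (n C D thr B' Btgt : ℕ) (hn1 : 1 ≤ n)
    (hsplit : C ≤ D + thr) (hIH : D ≤ B') (hthr : (n+1) * thr ≤ C)
    (harith : (n+1) * B' ≤ n * Btgt) : C ≤ Btgt := by
  have step1 : (n+1) * C ≤ (n+1) * B' + C := by
    calc (n+1) * C ≤ (n+1) * (D + thr) := mul_le_mul_right hsplit _
      _ = (n+1) * D + (n+1) * thr := by ring
      _ ≤ (n+1) * B' + C := add_le_add (mul_le_mul_right hIH _) hthr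
  have h7 : (n+1) * C = n * C + C := by ring
  rw [h7] at step1
  have step2 : n * C ≤ (n+1) * B' := by omega
  exact Nat.le_of_mul_le_mul_left (le_trans step2 harith) (by omega)

lemma key (k : ℕ) (hk : 1 ≤ k) :
    ∀ (N : ℕ) (G : DiGraph), Finite G.V → Finite G.E → Nat.card G.E = N →
      (∀ (m : ℕ) (q : Fin m → G.E), m < k → ¬ G.IsLoop q) →
      Nat.card {p : Fin k → G.E // G.IsPath p} ≤
        k * ((N / k + 1) ^ (N % k) * (N / k) ^ (k - N % k)) := by
  intro N
  induction N using Nat.strong_induction_on with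
  | _ N IH =>
    intro G hfV hfE hE hnl
    haveI := hfV
    haveI := hfE
    classical
    by_cases hNk : N < k
    · -- fewer than k edges: no paths of length k at all
      have hempty : IsEmpty {p : Fin k → G.E // G.IsPath p} := by
        constructor
        intro p
        have hinj : Function.Injective p.1 := path_inj hnl p.2
        have hle := Nat.card_le_card_of_injective p.1 hinj
        have h1 : Nat.card (Fin k) = k := by simp
        rw [h1, hE] at hle
        omega
      haveI := hempty
      rw [Nat.card_of_isEmpty]
      exact Nat.zero_le _
    · push_neg at hNk
      obtain ⟨n, hn⟩ : ∃ n, n = N / k := ⟨_, rfl⟩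
      obtain ⟨r, hrr⟩ : ∃ r, r = N % k := ⟨_, rfl⟩
      rw [← hn, ← hrr]
      have hdm : k * n + r = N := by rw [hn, hrr]; exact Nat.div_add_mod N k
      have hrk : r < k := by rw [hrr]; exact Nat.mod_lt _ (by omega)
      have hn1 : 1 ≤ n := by rw [hn]; exact (Nat.one_le_div_iff (by omega)).mpr hNk
      by_cases hA : ∀ v : G.V, Nat.card {f : G.E // G.s f = v} ≤ n
      · -- all out-degrees at most n
        obtain ⟨j, rfl⟩ : ∃ j, k = j + 1 := ⟨k - 1, by omega⟩
        have hcb := chain_bound G n N hE hA j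
        exact le_trans hcb (arithA (j+1) n r N hk hrk hdm)
      · -- some vertex has out-degree at least n+1
        push_neg at hA
        obtain ⟨v, hv⟩ := hA
        haveI : Fintype G.E := Fintype.ofFinite G.E
        haveI : Fintype {p : Fin k → G.E // G.IsPath p} := Fintype.ofFinite _
        set S : Finset G.E := Finset.univ.filter (fun f => G.s f = v) with hS
        have hScard : n + 1 ≤ S.card := by
          have h1 : Nat.card {f : G.E // G.s f = v} = S.card := by
            rw [Nat.card_eq_fintype_card, Fintype.card_subtype]
          omega
        set T : G.E → Finset {p : Fin k → G.E // G.IsPath p} :=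
          fun e' => Finset.univ.filter (fun pp => ∃ i, pp.1 i = e') with hT
        have hdisj : ∀ e1 ∈ S, ∀ e2 ∈ S, e1 ≠ e2 → Disjoint (T e1) (T e2) := by
          intro e1 he1 e2 he2 hne
          rw [Finset.disjoint_left]
          intro pp hp1 hp2
          rw [hT] at hp1 hp2
          simp only [Finset.mem_filter, Finset.mem_univ, true_and] at hp1 hp2
          obtain ⟨i1, hi1⟩ := hp1
          obtain ⟨i2, hi2⟩ := hp2
          rw [hS] at he1 he2
          simp only [Finset.mem_filter, Finset.mem_univ, true_and] at he1 he2
          have h12 : i1 = i2 := source_eq_imp_eq hnl pp.2 i1 i2 (by rw [hi1, hi2, he1, he2])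
          apply hne
          rw [← hi1, ← hi2, h12]
        have hsum : ∑ e' ∈ S, (T e').card ≤ Fintype.card {p : Fin k → G.E // G.IsPath p} := by
          rw [← Finset.card_biUnion hdisj]
          exact le_trans (Finset.card_le_univ _) (le_of_eq Finset.card_univ)
        have hex : ∃ e' ∈ S, (n+1) * (T e').card ≤ Fintype.card {p : Fin k → G.E // G.IsPath p} := by
          by_contra hcon
          push_neg at hcon
          have h1 : ∀ e' ∈ S, Fintype.card {p : Fin k → G.E // G.IsPath p} + 1 ≤ (n+1) * (T e').card :=
            fun e' he' => hcon e' he'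
          have h2 : S.card * (Fintype.card {p : Fin k → G.E // G.IsPath p} + 1)
              ≤ ∑ e' ∈ S, ((n+1) * (T e').card) := by
            calc S.card * (Fintype.card {p : Fin k → G.E // G.IsPath p} + 1)
                = ∑ _e' ∈ S, (Fintype.card {p : Fin k → G.E // G.IsPath p} + 1) := by
                  rw [Finset.sum_const, smul_eq_mul]
              _ ≤ ∑ e' ∈ S, ((n+1) * (T e').card) := Finset.sum_le_sum h1
          rw [← Finset.mul_sum] at h2
          have h3 : (n+1) * ∑ e' ∈ S, (T e').card
              ≤ (n+1) * Fintype.card {p : Fin k → G.E // G.IsPath p} :=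
            mul_le_mul_right hsum _
          have h4 : (n+1) * (Fintype.card {p : Fin k → G.E // G.IsPath p} + 1)
              ≤ S.card * (Fintype.card {p : Fin k → G.E // G.IsPath p} + 1) :=
            mul_le_mul_left hScard _
          have h5 := le_trans h4 (le_trans h2 h3)
          have h6 := Nat.le_of_mul_le_mul_left h5 (show 0 < n + 1 by omega)
          omega
        obtain ⟨e, heS, hthr⟩ := hex
        have hthr' : (n+1) * Nat.card {pp : {p : Fin k → G.E // G.IsPath p} // ∃ i, pp.1 i = e}
            ≤ Nat.card {p : Fin k → G.E // G.IsPath p} := by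
          rw [Nat.card_eq_fintype_card, Nat.card_eq_fintype_card, Fintype.card_subtype]
          exact hthr
        haveI : Finite (del G e).V := hfV
        haveI : Finite (del G e).E := Subtype.finite
        have hcardDel : Nat.card (del G e).E = N - 1 := by rw [card_del, hE]
        have hIH := IH (N-1) (by omega) (del G e) hfV Subtype.finite hcardDel (del_noloops e hnl)
        have hsplit := card_split G k e
        apply assemble n _ _ _ _ _ hn1 hsplit hIH hthr'
        -- remaining: (n+1) * B' ≤ n * Btgt
        rcases Nat.eq_zero_or_pos r with hr0 | hr1
        · subst hr0
          obtain ⟨m', rfl⟩ : ∃ m', n = m' + 1 := ⟨n - 1, by omega⟩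
          obtain ⟨b, hb⟩ : ∃ b, b = k * m' := ⟨_, rfl⟩
          have hkm : k * (m' + 1) = b + k := by rw [hb]; ring
          rw [hkm] at hdm
          have hN1 : N - 1 = k * m' + (k - 1) := by rw [← hb]; omega
          have hmod : (N-1) % k = k - 1 := by
            rw [hN1, Nat.mul_add_mod, Nat.mod_eq_of_lt (by omega)]
          have hdiv : (N-1) / k = m' := by
            rw [hN1, Nat.mul_add_div (by omega), Nat.div_eq_of_lt (show k - 1 < k by omega)]
            omega
          rw [hmod, hdiv]
          exact arithB0 k m' hk
        · obtain ⟨s, rfl⟩ : ∃ s, r = s + 1 := ⟨r - 1, by omega⟩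
          obtain ⟨a, ha⟩ : ∃ a, a = k * n := ⟨_, rfl⟩
          have hdm' : a + (s+1) = N := by rw [ha]; exact hdm
          have hN1 : N - 1 = k * n + s := by rw [← ha]; omega
          have hmod : (N-1) % k = s := by
            rw [hN1, Nat.mul_add_mod, Nat.mod_eq_of_lt (by omega)]
          have hdiv : (N-1) / k = n := by
            rw [hN1, Nat.mul_add_div (by omega), Nat.div_eq_of_lt (show s < k by omega)]
            omega
          rw [hmod, hdiv]
          exact arithB1 k n s (by omega)

end CountPathsAux

/-- (Main theorem, upper bound.) A finite directed graph with `N ≥ 2`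
edges, `1 ≤ k ≤ N`, `N = n·k + r`, `0 ≤ r ≤ k - 1`, and no loops of length strictly less
than `k`, has at most `k·(n+1)^r·n^(k-r)` paths of length `k`. -/
theorem count_paths_no_short_loops_le (G : DiGraph) [Finite G.V] [Finite G.E]
    (N n k r : ℕ) (hE : Nat.card G.E = N) (hN : 2 ≤ N)
    (hk1 : 1 ≤ k) (hkN : k ≤ N) (hNkr : N = n * k + r) (hr : r ≤ k - 1)
    (hnl : ∀ (m : ℕ) (q : Fin m → G.E), m < k → ¬ G.IsLoop q) :
    Nat.card {p : Fin k → G.E // G.IsPath p} ≤ k * ((n + 1) ^ r * n ^ (k - r)) := by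
  have hrk : r < k := by omega
  have hmod : N % k = r := by
    rw [hNkr, mul_comm n k, Nat.mul_add_mod, Nat.mod_eq_of_lt hrk]
  have hdiv : N / k = n := by
    rw [hNkr, mul_comm n k, Nat.mul_add_div (by omega), Nat.div_eq_of_lt hrk]
    omega
  have := CountPathsAux.key k hk1 N G ‹_› ‹_› hE hnl
  rwa [hmod, hdiv] at this
end
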